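/- Let g, h : 2^E → ℝ≥0 be monotone and submodular. Then there exists an ordering π = (e_1, …, e_n) of E such that for every k ∈ {1, …, n} and every S ⊆ E with |S| = k, (1 + e/(e − 1))·f(S_k) ≥ f(S). -/

import Mathlib

namespace IncDec

open Finset

variable {α : Type*} [Fintype α] [DecidableEq α]

/-- Marginal gain `F(x | S) = F(S ∪ {x}) - F(S)`. -/
def marg (F : Finset α → ℝ) (x : α) (S : Finset α) : ℝ := F (insert x S) - F S

/-- Marginal gain of a set: `F(T | S) = F(T ∪ S) - F(S)`. -/
def margSet (F : Finset α → ℝ) (T S : Finset α) : ℝ := F (T ∪ S) - F S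

/-- Monotone set function. -/
def Mono (F : Finset α → ℝ) : Prop := ∀ ⦃S T : Finset α⦄, S ⊆ T → F S ≤ F T

/-- Nonnegative set function. -/
def Nonneg (F : Finset α → ℝ) : Prop := ∀ S : Finset α, 0 ≤ F S

/-- The combined objective `f(S) = h(S) + g(E \ S)`. -/
def fObj (g h : Finset α → ℝ) (S : Finset α) : ℝ := h S + g Sᶜ

/-- `F` has generic submodularity ratio at least `γ`. -/
def GenSubRatioGE (F : Finset α → ℝ) (γ : ℝ) : Prop :=
  ∀ A B : Finset α, ∀ e : α, marg F e A ≥ γ * marg F e (A ∪ B)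

/-- `F` has curvature at most `c`. -/
def CurvatureLE (F : Finset α → ℝ) (c : ℝ) : Prop :=
  ∀ A B : Finset α, ∀ e : α, e ∉ B → marg F e (A ∪ B) ≥ (1 - c) * marg F e A

/-- Submodular set function. -/
def Submodular (F : Finset α → ℝ) : Prop :=
  ∀ ⦃S T : Finset α⦄, S ⊆ T → ∀ e : α, e ∉ T → marg F e T ≤ marg F e S

/-- Modular set function. -/
def Modular (F : Finset α → ℝ) : Prop := ∀ S : Finset α, F S = ∑ e ∈ S, F {e}

/-- Gross substitute set function. -/
def GrossSubstitute (F : Finset α → ℝ) : Prop :=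
  Submodular F ∧
    ∀ A B : Finset α, Disjoint A B → 2 ≤ B.card → ∀ b ∈ B,
      ∃ b' ∈ B.erase b,
        marg F b A + margSet F (B.erase b) A ≤ marg F b' A + margSet F (B.erase b') A

/-- The set of ratios appearing in the definition of the curvature. -/
def curvRatioSet (F : Finset α → ℝ) : Set ℝ :=
  {r | ∃ A B : Finset α, ∃ e : α, e ∉ B ∧ 0 < marg F e A ∧ r = marg F e (A ∪ B) / marg F e A}

/-- `F` has curvature exactly `c` (with `min ∅ := 1`, i.e. `c = 0` if the ratio set is empty). -/
def CurvatureEq (F : Finset α → ℝ) (c : ℝ) : Prop :=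
  (¬ (curvRatioSet F).Nonempty ∧ c = 0) ∨ IsLeast (curvRatioSet F) (1 - c)

/-- The set of ratios appearing in the definition of the generic submodularity ratio. -/
def gsRatioSet (F : Finset α → ℝ) : Set ℝ :=
  {r | ∃ A B : Finset α, ∃ e : α, 0 < marg F e (A ∪ B) ∧ r = marg F e A / marg F e (A ∪ B)}

/-- `F` has generic submodularity ratio exactly `γ` (with `min ∅ := 1`). -/
def GenSubRatioEq (F : Finset α → ℝ) (γ : ℝ) : Prop :=
  (¬ (gsRatioSet F).Nonempty ∧ γ = 1) ∨ IsLeast (gsRatioSet F) γ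

/-- The singleton-based ratio set `{F(e | E \ {e}) / F({e}) : e ∈ E, F({e}) > 0}`. -/
def curvSingletonSet (F : Finset α → ℝ) : Set ℝ :=
  {r | ∃ e : α, 0 < F {e} ∧ r = marg F e ({e}ᶜ) / F {e}}

/-- A run of the double-greedy algorithm for `g` and `h`: distinct elements `elt 0, …,
`elt (n-1)` enumerating `E` (`elt i` is the element `e*_{i+1}` of the paper), together with the
sets `H i`, `G i` (for `0 ≤ i ≤ n`), each new element maximizing the larger marginal gain and
being added to the side realizing it. -/
structure DGRun (α : Type*) [Fintype α] [DecidableEq α] (g h : Finset α → ℝ) where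
  elt : ℕ → α
  H : ℕ → Finset α
  G : ℕ → Finset α
  H0 : H 0 = ∅
  G0 : G 0 = ∅
  mem : ∀ i < Fintype.card α, elt i ∉ H i ∪ G i
  distinct : ∀ i < Fintype.card α, ∀ j < Fintype.card α, elt i = elt j → i = j
  enum : ∀ x : α, ∃ i < Fintype.card α, elt i = x
  greedy : ∀ i < Fintype.card α, ∀ x : α, x ∉ H i ∪ G i →
      max (marg g x (G i)) (marg h x (H i)) ≤ max (marg g (elt i) (G i)) (marg h (elt i) (H i))
  step : ∀ i < Fintype.card α,
      (H (i + 1) = insert (elt i) (H i) ∧ G (i + 1) = G i ∧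
        marg g (elt i) (G i) ≤ marg h (elt i) (H i)) ∨
      (G (i + 1) = insert (elt i) (G i) ∧ H (i + 1) = H i ∧
        marg h (elt i) (H i) ≤ marg g (elt i) (G i))

/-- `phi R i` is the increment `φ_{i+1}` of the double-greedy run `R`. -/
def phi {g h : Finset α → ℝ} (R : DGRun α g h) (i : ℕ) : ℝ :=
  max (marg g (R.elt i) (R.G i)) (marg h (R.elt i) (R.H i))

/-!
Run the double-greedy algorithm: at each step place the unplaced element, on the side `H` (scored
by `h`) or `G` (scored by `g`), with the largest marginal gain `φ`. List `H` in placement order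
followed by `G` in reverse placement order; then every prefix is an intermediate `H T`, or the
complement of an intermediate `G T`, and by the symmetry `g ↔ h` it suffices to treat `H T`.

Let `|O| = |H T| = k`. At an `H`-step `t`, submodularity and the greedy choice give
`h O ≤ h (H t) + k φ_t + (gains of the elements of O already placed in G)`, and `h (H t)` grows by
`φ_t`, so the gap shrinks by the factor `1 - 1/k`; after the `k` steps of `H T` it is below
`1/e` of its start, whence `h O ≤ e/(e-1) h (H T) + g (G n)`. Symmetrically the elements of `H T`
carry gains summing to at most `h (H T)`, which bounds `g Oᶜ - g (H T)ᶜ`; as `G n ⊆ (H T)ᶜ`,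
adding up gives `f O ≤ (1 + e/(e-1)) f (H T)`.
-/

section

open Real

section SetFunction

variable {F : Finset α → ℝ}

omit [Fintype α] in
theorem marg_nonneg (hm : Mono F) (x : α) (S : Finset α) : 0 ≤ marg F x S :=
  sub_nonneg.2 (hm (subset_insert x S))

omit [Fintype α] in
theorem Submodular.apply_union_le (hs : Submodular F) {s T : Finset α} (hsT : Disjoint s T) :
    F (s ∪ T) ≤ F T + ∑ x ∈ s, marg F x T := by
  induction s using Finset.induction_on with
  | empty => simp
  | @insert x s hx ih =>
    rw [disjoint_insert_left] at hsT
    have hxsT : x ∉ s ∪ T := by simp [hx, hsT.1]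
    calc F (insert x s ∪ T) = marg F x (s ∪ T) + F (s ∪ T) := by
          rw [insert_union, marg]; ring
      _ ≤ marg F x T + (F T + ∑ y ∈ s, marg F y T) :=
          add_le_add (hs subset_union_right x hxsT) (ih hsT.2)
      _ = F T + ∑ y ∈ insert x s, marg F y T := by rw [sum_insert hx]; ring

omit [Fintype α] in
theorem Submodular.apply_le_add_sum_marg (hs : Submodular F) (hm : Mono F) (O T : Finset α) :
    F O ≤ F T + ∑ x ∈ O \ T, marg F x T :=
  (hm (by rw [sdiff_union_self_eq_union]; exact subset_union_left)).trans
    (hs.apply_union_le sdiff_disjoint)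

theorem fObj_compl (g h : Finset α → ℝ) (S : Finset α) : fObj h g Sᶜ = fObj g h S := by
  rw [fObj, fObj, compl_compl, add_comm]

end SetFunction

theorem one_le_exp_one_div : 1 ≤ exp 1 / (exp 1 - 1) := by
  have := add_one_lt_exp one_ne_zero
  rw [le_div_iff₀ (by linarith)]
  linarith

theorem le_exp_one_div_mul_of_sub_le {c v : ℝ} (hv : 0 ≤ v) (hcv : c - v ≤ exp (-1) * max c 0) :
    c ≤ exp 1 / (exp 1 - 1) * v := by
  have he := add_one_lt_exp one_ne_zero
  rcases le_total c 0 with hc | hc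
  · exact hc.trans (mul_nonneg (by linarith [one_le_exp_one_div]) hv)
  rw [max_eq_left hc, exp_neg, ← div_eq_inv_mul, le_div_iff₀ (exp_pos 1)] at hcv
  rw [div_mul_eq_mul_div, le_div_iff₀ (by linarith)]
  nlinarith

theorem le_pow_mul_of_le_mul_or_le {w : ℕ → ℝ} {m : ℕ → ℕ} {q : ℝ} (hq : 0 ≤ q) (hm0 : m 0 = 0)
    {T : ℕ} (hstep : ∀ t < T, (m (t + 1) = m t ∧ w (t + 1) ≤ w t) ∨
      (m (t + 1) = m t + 1 ∧ w (t + 1) ≤ q * w t)) :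
    w T ≤ q ^ m T * w 0 := by
  induction T with
  | zero => simp [hm0]
  | succ T ih =>
    have ih := ih fun t ht => hstep t (by omega)
    rcases hstep T (by omega) with ⟨hm, hw⟩ | ⟨hm, hw⟩ <;> rw [hm]
    · exact hw.trans ih
    · rw [pow_succ, mul_comm _ q, mul_assoc]
      exact hw.trans (mul_le_mul_of_nonneg_left ih hq)

theorem exists_filter_take_eq_take_filter {β : Type*} (p : β → Bool) :
    ∀ (l : List β) {k : ℕ}, k ≤ (l.filter p).length →
      ∃ T ≤ l.length, (l.take T).filter p = (l.filter p).take k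
  | [], _, _ => ⟨0, le_rfl, by simp⟩
  | _ :: _, 0, _ => ⟨0, by simp, by simp⟩
  | a :: l, k + 1, hk => by
    by_cases hp : p a
    · obtain ⟨T, hT, he⟩ := exists_filter_take_eq_take_filter p l (k := k) (by simp_all)
      exact ⟨T + 1, by simpa using hT, by simp [hp, he]⟩
    · obtain ⟨T, hT, he⟩ := exists_filter_take_eq_take_filter p l (k := k + 1) (by simp_all)
      exact ⟨T + 1, by simpa using hT, by simp [hp, he]⟩

theorem toFinset_take_eq_compl_toFinset_drop {l : List α} (hl : l.Nodup) (hall : ∀ x, x ∈ l)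
    (k : ℕ) : (l.take k).toFinset = (l.drop k).toFinsetᶜ := by
  rw [← List.take_append_drop k l] at hl hall
  rw [eq_compl_iff_isCompl]
  refine ⟨List.disjoint_toFinset_iff_disjoint.2 (List.disjoint_of_nodup_append hl),
    codisjoint_iff.2 (eq_univ_iff_forall.2 fun x => ?_)⟩
  simpa [← List.mem_append] using hall x

omit [Fintype α] in
theorem union_eq_image_range_of_step {H G : ℕ → Finset α} {e : ℕ → α} {N : ℕ}
    (hH0 : H 0 = ∅) (hG0 : G 0 = ∅)
    (hstep : ∀ i < N, (H (i + 1) = insert (e i) (H i) ∧ G (i + 1) = G i) ∨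
      (G (i + 1) = insert (e i) (G i) ∧ H (i + 1) = H i)) :
    ∀ t ≤ N, H t ∪ G t = (range t).image e := by
  intro t
  induction t with
  | zero => simp [hH0, hG0]
  | succ t ih =>
    intro ht
    rw [range_add_one, image_insert, ← ih (by omega)]
    rcases hstep t (by omega) with ⟨h1, h2⟩ | ⟨h1, h2⟩ <;> rw [h1, h2]
    · rw [insert_union]
    · rw [union_insert]

namespace DGRun

variable {g h : Finset α → ℝ} (R : DGRun α g h)

def swap : DGRun α h g where
  elt := R.elt
  H := R.G
  G := R.H
  H0 := R.G0
  G0 := R.H0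
  mem i hi := by rw [union_comm]; exact R.mem i hi
  distinct := R.distinct
  enum := R.enum
  greedy i hi x hx := by
    rw [max_comm, max_comm (marg h _ _)]
    exact R.greedy i hi x (by rwa [union_comm])
  step i hi := (R.step i hi).symm

theorem phi_swap (i : ℕ) : phi R.swap i = phi R i := max_comm _ _

theorem H_union_G {t : ℕ} (ht : t ≤ Fintype.card α) :
    R.H t ∪ R.G t = (range t).image R.elt :=
  union_eq_image_range_of_step R.H0 R.G0
    (fun i hi => (R.step i hi).imp (fun hs => ⟨hs.1, hs.2.1⟩) (fun hs => ⟨hs.1, hs.2.1⟩)) t ht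

noncomputable def idx (x : α) : ℕ := (R.enum x).choose

theorem idx_lt (x : α) : R.idx x < Fintype.card α := (R.enum x).choose_spec.1

theorem elt_idx (x : α) : R.elt (R.idx x) = x := (R.enum x).choose_spec.2

theorem idx_elt {i : ℕ} (hi : i < Fintype.card α) : R.idx (R.elt i) = i :=
  R.distinct _ (R.idx_lt _) i hi (R.elt_idx _)

theorem idx_lt_of_mem {t : ℕ} (ht : t ≤ Fintype.card α) {x : α} (hx : x ∈ R.H t ∪ R.G t) :
    R.idx x < t := by
  rw [R.H_union_G ht, mem_image] at hx
  obtain ⟨i, hi, rfl⟩ := hx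
  rw [mem_range] at hi
  rwa [R.idx_elt (by omega)]

noncomputable def gain (x : α) : ℝ := phi R (R.idx x)

theorem gain_swap : R.swap.gain = R.gain := funext fun x => R.phi_swap (R.idx x)

theorem phi_nonneg (hm : Mono h) (i : ℕ) : 0 ≤ phi R i :=
  (marg_nonneg hm _ _).trans (le_max_right _ _)

theorem gain_nonneg (hm : Mono h) (x : α) : 0 ≤ R.gain x := R.phi_nonneg hm _

theorem H_succ {i : ℕ} (hi : i < Fintype.card α) :
    (R.H (i + 1) = insert (R.elt i) (R.H i) ∧ phi R i = marg h (R.elt i) (R.H i)) ∨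
      R.H (i + 1) = R.H i := by
  rcases R.step i hi with ⟨hH, -, hle⟩ | ⟨-, hH, -⟩
  · exact .inl ⟨hH, max_eq_right hle⟩
  · exact .inr hH

theorem H_mono {s t : ℕ} (hst : s ≤ t) (ht : t ≤ Fintype.card α) : R.H s ⊆ R.H t := by
  induction t, hst using Nat.le_induction with
  | base => exact subset_rfl
  | succ t _ ih =>
    refine (ih (by omega)).trans ?_
    rcases R.H_succ (by omega : t < Fintype.card α) with ⟨hH, -⟩ | hH <;> rw [hH]
    exact subset_insert _ _

theorem G_mono {s t : ℕ} (hst : s ≤ t) (ht : t ≤ Fintype.card α) : R.G s ⊆ R.G t :=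
  R.swap.H_mono hst ht

theorem disjoint_H_G {t : ℕ} (ht : t ≤ Fintype.card α) : Disjoint (R.H t) (R.G t) := by
  induction t with
  | zero => simp [R.H0]
  | succ t ih =>
    have hmem := R.mem t (by omega)
    rw [mem_union, not_or] at hmem
    rcases R.step t (by omega) with ⟨hH, hG, -⟩ | ⟨hG, hH, -⟩ <;> rw [hH, hG]
    · exact disjoint_insert_left.2 ⟨hmem.2, ih (by omega)⟩
    · exact disjoint_insert_right.2 ⟨hmem.1, ih (by omega)⟩

theorem G_eq_compl_H : R.G (Fintype.card α) = (R.H (Fintype.card α))ᶜ := by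
  have hcover : R.H (Fintype.card α) ∪ R.G (Fintype.card α) = univ := by
    rw [R.H_union_G le_rfl, eq_univ_iff_forall]
    simpa using R.enum
  rw [eq_compl_iff_isCompl]
  exact ⟨(R.disjoint_H_G le_rfl).symm, codisjoint_iff.2 (by rwa [sup_eq_union, union_comm])⟩

theorem apply_H_eq_add_sum_gain {t : ℕ} (ht : t ≤ Fintype.card α) :
    h (R.H t) = h ∅ + ∑ x ∈ R.H t, R.gain x := by
  induction t with
  | zero => simp [R.H0]
  | succ t ih =>
    rcases R.H_succ (by omega : t < Fintype.card α) with ⟨hH, hphi⟩ | hH <;> rw [hH]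
    · have hnot : R.elt t ∉ R.H t := fun hx => R.mem t (by omega) (mem_union_left _ hx)
      rw [sum_insert hnot, gain, R.idx_elt (by omega), hphi, marg]
      linarith [ih (by omega)]
    · exact ih (by omega)

theorem apply_G_eq_add_sum_gain {t : ℕ} (ht : t ≤ Fintype.card α) :
    g (R.G t) = g ∅ + ∑ x ∈ R.G t, R.gain x := by
  rw [← R.gain_swap]
  exact R.swap.apply_H_eq_add_sum_gain ht

theorem marg_le_gain (hs : Submodular h) {x : α} {X : Finset α} (hX : R.H (R.idx x) ⊆ X)
    (hx : x ∉ X) : marg h x X ≤ R.gain x := by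
  refine (hs hX x hx).trans ?_
  unfold gain phi
  rw [R.elt_idx]
  exact le_max_right _ _

theorem marg_le_phi {i : ℕ} (hi : i < Fintype.card α) {x : α} (hx : x ∉ R.H i ∪ R.G i) :
    marg h x (R.H i) ≤ phi R i :=
  (le_max_right _ _).trans (R.greedy i hi x hx)

theorem apply_le_add_sum_gain_add_card_mul (hm : Mono h) (hs : Submodular h) {t : ℕ}
    (ht : t < Fintype.card α) (O : Finset α) :
    h O ≤ h (R.H t) + ∑ x ∈ O ∩ R.G (Fintype.card α), R.gain x + O.card * phi R t := by
  have hsplit := sum_inter_add_sum_sdiff (O \ R.H t) (R.G t) (fun x => marg h x (R.H t))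
  have placed : ∑ x ∈ (O \ R.H t) ∩ R.G t, marg h x (R.H t) ≤
      ∑ x ∈ O ∩ R.G (Fintype.card α), R.gain x := by
    calc _ ≤ ∑ x ∈ (O \ R.H t) ∩ R.G t, R.gain x := by
          refine sum_le_sum fun x hx => ?_
          rw [mem_inter, mem_sdiff] at hx
          have hidx := R.idx_lt_of_mem ht.le (mem_union_right _ hx.2)
          exact R.marg_le_gain hs (R.H_mono hidx.le ht.le) hx.1.2
      _ ≤ _ := sum_le_sum_of_subset_of_nonneg
          (inter_subset_inter sdiff_subset (R.G_mono ht.le le_rfl))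
          fun x _ _ => R.gain_nonneg hm x
  have unplaced : ∑ x ∈ (O \ R.H t) \ R.G t, marg h x (R.H t) ≤ O.card * phi R t := by
    calc _ ≤ ((O \ R.H t) \ R.G t).card • phi R t :=
          sum_le_card_nsmul _ _ _ fun x hx => R.marg_le_phi ht (by simp_all)
      _ ≤ O.card * phi R t := by
          rw [nsmul_eq_mul]
          gcongr
          · exact R.phi_nonneg hm t
          · exact sdiff_subset.trans sdiff_subset
  linarith [hs.apply_le_add_sum_marg hm O (R.H t)]

theorem apply_le_mul_add_sum_gain (hm : Mono h) (h0 : Nonneg h) (hs : Submodular h) {T : ℕ}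
    (hT : T ≤ Fintype.card α) {O : Finset α} (hO : O.card = (R.H T).card) :
    h O ≤ exp 1 / (exp 1 - 1) * h (R.H T) + ∑ x ∈ O ∩ R.G (Fintype.card α), R.gain x := by
  set k := (R.H T).card
  set c := h O - ∑ x ∈ O ∩ R.G (Fintype.card α), R.gain x
  rcases Nat.eq_zero_or_pos k with hk | hk
  · rw [card_eq_zero.1 (hO.trans hk), card_eq_zero.1 hk, empty_inter, sum_empty]
    nlinarith [one_le_exp_one_div, h0 ∅]
  suffices c - h (R.H T) ≤ exp (-1) * max c 0 by
    linarith [le_exp_one_div_mul_of_sub_le (h0 _) this]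
  have hq : 0 ≤ 1 - 1 / (k : ℝ) := by
    rw [sub_nonneg, div_le_one (by positivity)]
    exact_mod_cast hk
  have decay : max (c - h (R.H T)) 0 ≤ (1 - 1 / (k : ℝ)) ^ k * max (c - h ∅) 0 := by
    have := le_pow_mul_of_le_mul_or_le (w := fun t => max (c - h (R.H t)) 0)
      (m := fun t => (R.H t).card) hq (by simp [R.H0]) (T := T) fun t ht => ?_
    · simpa [R.H0] using this
    rcases R.H_succ (by omega : t < Fintype.card α) with ⟨hH, hphi⟩ | hH
    · right
      have hnot : R.elt t ∉ R.H t := fun hx => R.mem t (by omega) (mem_union_left _ hx)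
      have hbound := R.apply_le_add_sum_gain_add_card_mul hm hs (by omega : t < Fintype.card α) O
      have hinc : h (R.H (t + 1)) = h (R.H t) + phi R t := by rw [hphi, hH, marg]; ring
      refine ⟨by simp only [hH, card_insert_of_notMem hnot], max_le ?_ ?_⟩
      · rw [hO] at hbound
        have hdiv : (c - h (R.H t)) / k ≤ phi R t := by
          rw [div_le_iff₀ (by positivity)]
          linarith
        calc c - h (R.H (t + 1)) ≤ (1 - 1 / (k : ℝ)) * (c - h (R.H t)) := by
              rw [hinc, one_sub_mul, one_div_mul_eq_div]
              linarith
          _ ≤ _ := mul_le_mul_of_nonneg_left (le_max_left _ _) hq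
      · exact mul_nonneg hq (le_max_right _ _)
    · left
      simp only [hH, le_rfl, and_self]
  calc c - h (R.H T) ≤ max (c - h (R.H T)) 0 := le_max_left _ _
    _ ≤ (1 - 1 / (k : ℝ)) ^ k * max (c - h ∅) 0 := decay
    _ ≤ exp (-1) * max c 0 := by
      gcongr
      · exact one_sub_div_pow_le_exp_neg (by exact_mod_cast hk)
      · linarith [h0 ∅]

theorem fObj_le_H (hgm : Mono g) (hhm : Mono h) (hg0 : Nonneg g) (hh0 : Nonneg h)
    (hgs : Submodular g) (hhs : Submodular h) {T : ℕ} (hT : T ≤ Fintype.card α) {S : Finset α}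
    (hS : S.card = (R.H T).card) :
    fObj g h S ≤ (1 + exp 1 / (exp 1 - 1)) * fObj g h (R.H T) := by
  have hGT : R.G (Fintype.card α) ⊆ (R.H T)ᶜ := by
    rw [G_eq_compl_H]
    exact compl_subset_compl.2 (R.H_mono hT le_rfl)
  have bound_h : h S ≤ exp 1 / (exp 1 - 1) * h (R.H T) + g (R.H T)ᶜ := by
    have hsum : ∑ x ∈ S ∩ R.G (Fintype.card α), R.gain x ≤
        ∑ x ∈ R.G (Fintype.card α), R.gain x :=
      sum_le_sum_of_subset_of_nonneg inter_subset_right fun x _ _ => R.gain_nonneg hhm x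
    linarith [R.apply_le_mul_add_sum_gain hhm hh0 hhs hT hS, R.apply_G_eq_add_sum_gain le_rfl,
      hgm hGT, hg0 ∅]
  have bound_g : g Sᶜ ≤ g (R.H T)ᶜ + h (R.H T) := by
    have hsum : ∑ x ∈ Sᶜ \ (R.H T)ᶜ, marg g x (R.H T)ᶜ ≤ ∑ x ∈ R.H T, R.gain x := by
      calc _ ≤ ∑ x ∈ Sᶜ \ (R.H T)ᶜ, R.gain x := by
            refine sum_le_sum fun x hx => ?_
            rw [← R.gain_swap]
            refine R.swap.marg_le_gain hgs ((R.G_mono (R.idx_lt x).le le_rfl).trans hGT) ?_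
            exact (mem_sdiff.1 hx).2
        _ ≤ _ := sum_le_sum_of_subset_of_nonneg (fun x hx => by simpa using (mem_sdiff.1 hx).2)
            fun x _ _ => R.gain_nonneg hhm x
    linarith [hgs.apply_le_add_sum_marg hgm Sᶜ (R.H T)ᶜ, R.apply_H_eq_add_sum_gain hT, hh0 ∅]
  have hC := one_le_exp_one_div
  rw [fObj, fObj]
  nlinarith [mul_nonneg (sub_nonneg.2 hC) (hg0 (R.H T)ᶜ)]

theorem fObj_le_compl_G (hgm : Mono g) (hhm : Mono h) (hg0 : Nonneg g) (hh0 : Nonneg h)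
    (hgs : Submodular g) (hhs : Submodular h) {T : ℕ} (hT : T ≤ Fintype.card α) {S : Finset α}
    (hS : Sᶜ.card = (R.G T).card) :
    fObj g h S ≤ (1 + exp 1 / (exp 1 - 1)) * fObj g h (R.G T)ᶜ := by
  rw [← fObj_compl, ← fObj_compl g h, compl_compl]
  exact R.swap.fObj_le_H hhm hgm hh0 hg0 hhs hgs hT hS

noncomputable def timeline : List α := (List.range (Fintype.card α)).map R.elt

/-- Every prefix of this ordering is some `H t` or the complement of some `G t`. -/
noncomputable def order : List α :=
  R.timeline.filter (· ∈ R.H (Fintype.card α)) ++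
    (R.timeline.filter (· ∈ R.G (Fintype.card α))).reverse

theorem order_swap : R.swap.order = R.order.reverse := by
  rw [order, order, List.reverse_append, List.reverse_reverse]
  rfl

theorem nodup_timeline : R.timeline.Nodup :=
  List.nodup_range.map_on fun i hi j hj => R.distinct i (by simpa using hi) j (by simpa using hj)

theorem mem_timeline (x : α) : x ∈ R.timeline := by simpa [timeline] using R.enum x

theorem order_perm : R.order.Perm R.timeline := by
  refine ((List.perm_append_left_iff _).2 (List.reverse_perm _)).trans ?_
  convert List.filter_append_perm (· ∈ R.H (Fintype.card α)) R.timeline using 3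
  simp [G_eq_compl_H]

theorem nodup_order : R.order.Nodup := R.order_perm.nodup_iff.2 R.nodup_timeline

theorem mem_order (x : α) : x ∈ R.order := R.order_perm.mem_iff.2 (R.mem_timeline x)

theorem length_order : R.order.length = Fintype.card α := by
  rw [R.order_perm.length_eq, timeline, List.length_map, List.length_range]

theorem filter_H_union_G {t : ℕ} (ht : t ≤ Fintype.card α) :
    (R.H t ∪ R.G t).filter (· ∈ R.H (Fintype.card α)) = R.H t := by
  ext x
  simp only [mem_filter, mem_union]
  constructor
  · rintro ⟨hx | hx, hxH⟩
    · exact hx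
    · exact absurd hxH (disjoint_right.1 (R.disjoint_H_G le_rfl) (R.G_mono ht le_rfl hx))
  · exact fun hx => ⟨.inl hx, R.H_mono ht le_rfl hx⟩

theorem exists_take_order_eq_H {k : ℕ} (hk : k ≤ (R.H (Fintype.card α)).card) :
    ∃ T ≤ Fintype.card α, (R.order.take k).toFinset = R.H T := by
  have hlen : (R.timeline.filter (· ∈ R.H (Fintype.card α))).length =
      (R.H (Fintype.card α)).card := by
    rw [← List.toFinset_card_of_nodup (R.nodup_timeline.filter _), List.toFinset_filter]
    congr 1
    ext x
    simp [R.mem_timeline]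
  obtain ⟨T, hT, htake⟩ := exists_filter_take_eq_take_filter _ R.timeline (hk.trans hlen.ge)
  have hTn : T ≤ Fintype.card α := by simpa [timeline] using hT
  refine ⟨T, hTn, ?_⟩
  rw [order, List.take_append_of_le_length (hk.trans hlen.ge), ← htake, List.toFinset_filter,
    timeline, ← List.map_take, List.take_range, min_eq_left hTn, ← R.filter_H_union_G hTn,
    R.H_union_G hTn]
  congr 1
  ext x
  simp

theorem exists_take_order_eq_compl_G {k : ℕ} (hk : (R.H (Fintype.card α)).card ≤ k)
    (hkn : k ≤ Fintype.card α) :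
    ∃ T ≤ Fintype.card α, (R.order.take k).toFinset = (R.G T)ᶜ := by
  have hk' : Fintype.card α - k ≤ (R.swap.H (Fintype.card α)).card := by
    change _ ≤ (R.G (Fintype.card α)).card
    rw [G_eq_compl_H, card_compl]
    omega
  obtain ⟨T, hT, htake⟩ := R.swap.exists_take_order_eq_H hk'
  refine ⟨T, hT, ?_⟩
  rw [order_swap, List.take_reverse, List.toFinset_reverse, length_order,
    Nat.sub_sub_self hkn] at htake
  rw [toFinset_take_eq_compl_toFinset_drop R.nodup_order R.mem_order, htake]
  rfl

end DGRun

section Greedy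

variable (g h : Finset α → ℝ) [Nonempty α]

noncomputable def greedyChoice (H G : Finset α) : α :=
  if hne : (H ∪ G)ᶜ.Nonempty then
    (exists_max_image _ (fun x => max (marg g x G) (marg h x H)) hne).choose
  else Classical.arbitrary α

theorem greedyChoice_spec {H G : Finset α} (hne : (H ∪ G)ᶜ.Nonempty) :
    greedyChoice g h H G ∉ H ∪ G ∧ ∀ x ∉ H ∪ G,
      max (marg g x G) (marg h x H) ≤
        max (marg g (greedyChoice g h H G) G) (marg h (greedyChoice g h H G) H) := by
  have hspec := (exists_max_image _ (fun x => max (marg g x G) (marg h x H)) hne).choose_spec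
  rw [greedyChoice, dif_pos hne]
  exact ⟨mem_compl.1 hspec.1, fun x hx => hspec.2 x (mem_compl.2 hx)⟩

noncomputable def greedyState : ℕ → Finset α × Finset α
  | 0 => (∅, ∅)
  | i + 1 =>
    let x := greedyChoice g h (greedyState i).1 (greedyState i).2
    if marg g x (greedyState i).2 ≤ marg h x (greedyState i).1 then
      (insert x (greedyState i).1, (greedyState i).2)
    else ((greedyState i).1, insert x (greedyState i).2)

noncomputable def greedyElt (i : ℕ) : α :=
  greedyChoice g h (greedyState g h i).1 (greedyState g h i).2

theorem greedyState_step (i : ℕ) :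
    ((greedyState g h (i + 1)).1 = insert (greedyElt g h i) (greedyState g h i).1 ∧
        (greedyState g h (i + 1)).2 = (greedyState g h i).2 ∧
        marg g (greedyElt g h i) (greedyState g h i).2 ≤
          marg h (greedyElt g h i) (greedyState g h i).1) ∨
      ((greedyState g h (i + 1)).2 = insert (greedyElt g h i) (greedyState g h i).2 ∧
        (greedyState g h (i + 1)).1 = (greedyState g h i).1 ∧
        marg h (greedyElt g h i) (greedyState g h i).1 ≤
          marg g (greedyElt g h i) (greedyState g h i).2) := by
  by_cases hle : marg g (greedyElt g h i) (greedyState g h i).2 ≤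
      marg h (greedyElt g h i) (greedyState g h i).1
  · left
    simp only [greedyState, greedyElt] at hle ⊢
    simp [hle]
  · right
    simp only [greedyState, greedyElt] at hle ⊢
    simp [hle, le_of_not_ge hle]

theorem greedyState_union (t : ℕ) :
    (greedyState g h t).1 ∪ (greedyState g h t).2 = (range t).image (greedyElt g h) :=
  union_eq_image_range_of_step (H := fun i => (greedyState g h i).1)
    (G := fun i => (greedyState g h i).2) rfl rfl
    (fun i _ => (greedyState_step g h i).imp (fun hs => ⟨hs.1, hs.2.1⟩)
      (fun hs => ⟨hs.1, hs.2.1⟩)) t le_rfl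

theorem compl_greedyState_nonempty {i : ℕ} (hi : i < Fintype.card α) :
    ((greedyState g h i).1 ∪ (greedyState g h i).2)ᶜ.Nonempty := by
  rw [← card_pos, card_compl, greedyState_union]
  have := card_image_le (s := range i) (f := greedyElt g h)
  rw [card_range] at this
  omega

theorem greedyElt_injOn : Set.InjOn (greedyElt g h) (Set.Iio (Fintype.card α)) := by
  suffices ∀ i j, i < j → j < Fintype.card α → greedyElt g h i ≠ greedyElt g h j by
    intro i hi j hj hij
    rcases lt_trichotomy i j with hlt | heq | hgt
    · exact absurd hij (this i j hlt hj)
    · exact heq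
    · exact absurd hij.symm (this j i hgt hi)
  intro i j hij hj heq
  apply (greedyChoice_spec g h (compl_greedyState_nonempty g h hj)).1
  rw [greedyState_union]
  exact mem_image.2 ⟨i, mem_range.2 hij, heq⟩

noncomputable def greedyRun : DGRun α g h where
  elt := greedyElt g h
  H i := (greedyState g h i).1
  G i := (greedyState g h i).2
  H0 := rfl
  G0 := rfl
  mem i hi := (greedyChoice_spec g h (compl_greedyState_nonempty g h hi)).1
  distinct i hi j hj := greedyElt_injOn g h hi hj
  enum x := by
    have himage : (range (Fintype.card α)).image (greedyElt g h) = univ := by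
      refine eq_univ_of_card _ ?_
      rw [card_image_of_injOn (by simpa using greedyElt_injOn g h), card_range]
    have hx : x ∈ (range (Fintype.card α)).image (greedyElt g h) := himage ▸ mem_univ x
    simpa using hx
  greedy i hi := (greedyChoice_spec g h (compl_greedyState_nonempty g h hi)).2
  step i _ := greedyState_step g h i

end Greedy

end

theorem stmt1 (g h : Finset α → ℝ)
    (hgm : Mono g) (hhm : Mono h) (hg0 : Nonneg g) (hh0 : Nonneg h)
    (hgs : Submodular g) (hhs : Submodular h) :
    ∃ π : List α, π.Nodup ∧ (∀ x : α, x ∈ π) ∧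
      ∀ k : ℕ, 1 ≤ k → k ≤ Fintype.card α → ∀ S : Finset α, S.card = k →
        (1 + Real.exp 1 / (Real.exp 1 - 1)) * fObj g h (π.take k).toFinset ≥ fObj g h S := by
  cases isEmpty_or_nonempty α
  · exact ⟨[], List.nodup_nil, isEmptyElim, fun k hk hkn => by simp at hkn; omega⟩
  set R := greedyRun g h
  refine ⟨R.order, R.nodup_order, R.mem_order, fun k _ hkn S hS => ?_⟩
  have hcard : (R.order.take k).toFinset.card = k := by
    rw [List.toFinset_card_of_nodup (R.nodup_order.sublist (List.take_sublist _ _)),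
      List.length_take, R.length_order, min_eq_left hkn]
  rcases le_total k (R.H (Fintype.card α)).card with hk | hk
  · obtain ⟨T, hT, hprefix⟩ := R.exists_take_order_eq_H hk
    rw [hprefix] at hcard ⊢
    exact R.fObj_le_H hgm hhm hg0 hh0 hgs hhs hT (hS.trans hcard.symm)
  · obtain ⟨T, hT, hprefix⟩ := R.exists_take_order_eq_compl_G hk hkn
    rw [hprefix, card_compl] at hcard
    rw [hprefix]
    refine R.fObj_le_compl_G hgm hhm hg0 hh0 hgs hhs hT ?_
    rw [card_compl, hS]
    have := card_le_univ (R.G T)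
    omega
end IncDec
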